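/- arXiv:math/0503007 — 2 statements merged into one kernel-verified Lean document; each statement's English description precedes it below -/
import Mathlib

section
/- In the natural edge labeling of NC_W(γ), if [u, v] is an interval of length two and (s, t) is the label of a maximal chain of [u, v], then there exists a reflection s' such that (t, s') is also the label of a maximal chain of [u, v]; specifically s' = tst works. -/
open scoped RealInnerProductSpace
open Module

noncomputable section

variable {V : Type*} [NormedAddCommGroup V] [InnerProductSpace ℝ V]

/-- `g` acts as the orthogonal reflection in the hyperplane orthogonal to `α`. -/
def reflFormula (α : V) (g : V ≃ₗᵢ[ℝ] V) : Prop :=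
  ∀ v, g v = v - (2 * ⟪α, v⟫ / ⟪α, α⟫) • α

/-- `g` is an orthogonal reflection. -/
def IsReflection (g : V ≃ₗᵢ[ℝ] V) : Prop :=
  ∃ α : V, α ≠ 0 ∧ reflFormula α g

/-- A finite real reflection group: a finite subgroup of the orthogonal group
generated by its reflections. -/
def IsReflectionGroup (W : Subgroup (V ≃ₗᵢ[ℝ] V)) : Prop :=
  Finite W ∧ Subgroup.closure {g | g ∈ W ∧ IsReflection g} = W

/-- Reflection length: the least `k` such that `w` is a product of `k` reflections. -/
def refLen (W : Subgroup (V ≃ₗᵢ[ℝ] V)) (w : W) : ℕ :=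
  sInf {k | ∃ l : List W, l.length = k ∧ (∀ t ∈ l, IsReflection (t : W).1) ∧ l.prod = w}

/-- The absolute order on `W`. -/
def absLe (W : Subgroup (V ≃ₗᵢ[ℝ] V)) (u v : W) : Prop :=
  refLen W u + refLen W (u⁻¹ * v) = refLen W v

/-- Covering relation of the absolute order. -/
def covers (W : Subgroup (V ≃ₗᵢ[ℝ] V)) (u v : W) : Prop :=
  absLe W u v ∧ u ≠ v ∧ ∀ z, absLe W u z → absLe W z v → z = u ∨ z = v

/-- The fixed subspace of an isometry. -/
def fixedSpace (g : V ≃ₗᵢ[ℝ] V) : Submodule ℝ V where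
  carrier := {v | g v = v}
  add_mem' := by
    intro a b ha hb
    simp only [Set.mem_setOf_eq, map_add] at *
    rw [ha, hb]
  zero_mem' := by simp
  smul_mem' := by
    intro c a ha
    simp only [Set.mem_setOf_eq, map_smul] at *
    rw [ha]

/-- A root system for the reflection group `W`. -/
def IsRootSystemFor (W : Subgroup (V ≃ₗᵢ[ℝ] V)) (Φ : Set V) : Prop :=
  Φ.Finite ∧ (∀ α ∈ Φ, α ≠ 0) ∧ (∀ α ∈ Φ, -α ∈ Φ) ∧
  (∀ α ∈ Φ, ∀ c : ℝ, c • α ∈ Φ → c = 1 ∨ c = -1) ∧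
  (∀ α ∈ Φ, ∃ t ∈ W, reflFormula α t) ∧
  (∀ t ∈ W, IsReflection t → ∃ α ∈ Φ, reflFormula α t) ∧
  (∀ g ∈ W, ∀ α ∈ Φ, g α ∈ Φ)

/-- A simple system for `Φ`: roots `σ 1, …, σ ℓ` which are linearly independent and
such that every root is a nonnegative or nonpositive combination of them. -/
def IsSimpleSystem (Φ : Set V) {ℓ : ℕ} (σ : Fin ℓ → V) : Prop :=
  (∀ i, σ i ∈ Φ) ∧ LinearIndependent ℝ σ ∧
  ∀ α ∈ Φ, (∃ c : Fin ℓ → ℝ, (∀ i, 0 ≤ c i) ∧ α = ∑ i, c i • σ i) ∨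
           (∃ c : Fin ℓ → ℝ, (∀ i, 0 ≤ c i) ∧ -α = ∑ i, c i • σ i)

/-- `γ` is a Coxeter element of `W`: a product, in some order, of the reflections in
the `ℓ` simple roots of some simple system of the root system `Φ`. -/
def IsCoxeterElement (W : Subgroup (V ≃ₗᵢ[ℝ] V)) (Φ : Set V) (ℓ : ℕ) (γ : W) : Prop :=
  ∃ σ : Fin ℓ → V, IsSimpleSystem Φ σ ∧
    ∃ t : Fin ℓ → W, (∀ i, reflFormula (σ i) (t i).1) ∧
      ∃ l : List (Fin ℓ), l.Nodup ∧ (∀ i, i ∈ l) ∧ (l.map t).prod = γ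

/-- `l` is a maximal (saturated) chain from `u` to `v` in the absolute order. -/
def IsMaximalChain (W : Subgroup (V ≃ₗᵢ[ℝ] V)) (u v : W) (l : List W) : Prop :=
  l.head? = some u ∧ l.getLast? = some v ∧ l.Chain' (covers W)

/-- The label of a chain under the natural edge labeling `λ (x, y) = x⁻¹ * y`. -/
def chainLabels (W : Subgroup (V ≃ₗᵢ[ℝ] V)) (l : List W) : List W :=
  l.zipWith (fun x y => x⁻¹ * y) l.tail

end

/-!
Both labels have reflection length one (their lengths are positive and add up to two), so `s`
and `t` are reflections. As `t` is an involution, `v = u s t = (u t) (t s t)`, and `t s t` is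
again a reflection. Subadditivity of reflection length then squeezes `ℓ(u t)` between
`ℓ(v) - 1` and `ℓ(u) + 1`, so `u ⋖ u t ⋖ v` with labels `t` and `t s t`.
-/

section Reflections

variable {V : Type*} [NormedAddCommGroup V] [InnerProductSpace ℝ V]

theorem reflFormula_reflection (α : V) : reflFormula α (ℝ ∙ α)ᗮ.reflection := by
  intro v
  rw [Submodule.reflection_orthogonal_apply, Submodule.reflection_singleton_apply,
    real_inner_self_eq_norm_sq, mul_div_assoc]
  module

theorem reflFormula.eq_reflection {α : V} {g : V ≃ₗᵢ[ℝ] V} (h : reflFormula α g) :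
    g = (ℝ ∙ α)ᗮ.reflection :=
  LinearIsometryEquiv.ext fun v => by rw [h v, reflFormula_reflection α v]

theorem IsReflection.mul_self {g : V ≃ₗᵢ[ℝ] V} (h : IsReflection g) : g * g = 1 := by
  obtain ⟨α, -, hα⟩ := h
  rw [hα.eq_reflection]
  exact Submodule.reflection_mul_reflection _

theorem IsReflection.inv_eq {g : V ≃ₗᵢ[ℝ] V} (h : IsReflection g) : g⁻¹ = g :=
  inv_eq_of_mul_eq_one_right h.mul_self

theorem IsReflection.ne_one {g : V ≃ₗᵢ[ℝ] V} (h : IsReflection g) : g ≠ 1 := by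
  obtain ⟨α, hα0, hα⟩ := h
  intro hg
  have : -α = α := by
    rw [← Submodule.reflection_orthogonalComplement_singleton_eq_neg (𝕜 := ℝ),
      ← hα.eq_reflection, hg]
    rfl
  exact hα0 (by simpa [neg_eq_self] using congrArg (⟪α, ·⟫) this)

theorem IsReflection.conj {s : V ≃ₗᵢ[ℝ] V} (h : IsReflection s) (g : V ≃ₗᵢ[ℝ] V) :
    IsReflection (g * s * g⁻¹) := by
  obtain ⟨α, hα0, hα⟩ := h
  refine ⟨g α, by simpa using hα0, ?_⟩
  have hmap : (ℝ ∙ α)ᗮ.map (g.toLinearEquiv : V →ₗ[ℝ] V) = (ℝ ∙ g α)ᗮ := by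
    rw [Submodule.map_orthogonal_equiv, Submodule.map_span, Set.image_singleton]
    rfl
  have hconj := Submodule.reflection_map g (ℝ ∙ α)ᗮ
  simp only [hmap, ← hα.eq_reflection] at hconj
  rw [show g * s * g⁻¹ = (ℝ ∙ g α)ᗮ.reflection from hconj.symm]
  exact reflFormula_reflection (g α)

end Reflections

section ReflectionLength

variable {V : Type*} [NormedAddCommGroup V] [InnerProductSpace ℝ V]
  {W : Subgroup (V ≃ₗᵢ[ℝ] V)}

theorem IsReflectionGroup.exists_prod_eq (hW : IsReflectionGroup W) (w : W) :
    ∃ l : List W, (∀ t ∈ l, IsReflection t.1) ∧ l.prod = w := by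
  suffices ∀ x (hx : x ∈ Subgroup.closure {g | g ∈ W ∧ IsReflection g}),
      ∃ l : List W, (∀ t ∈ l, IsReflection t.1) ∧ (l.prod).1 = x by
    obtain ⟨l, hl, hprod⟩ := this w (hW.2.symm ▸ w.2)
    exact ⟨l, hl, Subtype.ext hprod⟩
  intro x hx
  induction hx using Subgroup.closure_induction_left with
  | one => exact ⟨[], by simp, rfl⟩
  | mul_left r hr y _ ih =>
    obtain ⟨l, hl, hprod⟩ := ih
    exact ⟨⟨r, hr.1⟩ :: l, by simpa [hr.2] using hl,
      by rw [List.prod_cons, Subgroup.coe_mul, hprod]⟩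
  | inv_mul_cancel r hr y _ ih =>
    obtain ⟨l, hl, hprod⟩ := ih
    exact ⟨⟨r, hr.1⟩ :: l, by simpa [hr.2] using hl,
      by rw [List.prod_cons, Subgroup.coe_mul, hprod, hr.2.inv_eq]⟩

theorem refLen_le_length {w : W} {l : List W} (hl : ∀ t ∈ l, IsReflection t.1)
    (hprod : l.prod = w) : refLen W w ≤ l.length :=
  Nat.sInf_le ⟨l, rfl, hl, hprod⟩

theorem IsReflectionGroup.exists_length_eq_refLen (hW : IsReflectionGroup W) (w : W) :
    ∃ l : List W, l.length = refLen W w ∧ (∀ t ∈ l, IsReflection t.1) ∧ l.prod = w := by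
  obtain ⟨l, hl, hprod⟩ := hW.exists_prod_eq w
  exact Nat.sInf_mem (s := {k | ∃ l : List W, l.length = k ∧ _})
    ⟨l.length, l, rfl, hl, hprod⟩

theorem refLen_eq_zero_iff (hW : IsReflectionGroup W) {w : W} : refLen W w = 0 ↔ w = 1 := by
  refine ⟨fun h => ?_, fun h => ?_⟩
  · obtain ⟨l, hlen, -, hprod⟩ := hW.exists_length_eq_refLen w
    rw [h, List.length_eq_zero_iff] at hlen
    rw [← hprod, hlen, List.prod_nil]
  · exact Nat.le_zero.1 (refLen_le_length (l := []) (by simp) h.symm)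

theorem refLen_mul_le (hW : IsReflectionGroup W) (x y : W) :
    refLen W (x * y) ≤ refLen W x + refLen W y := by
  obtain ⟨l₁, hlen₁, hl₁, rfl⟩ := hW.exists_length_eq_refLen x
  obtain ⟨l₂, hlen₂, hl₂, rfl⟩ := hW.exists_length_eq_refLen y
  rw [← hlen₁, ← hlen₂, ← List.length_append]
  exact refLen_le_length (fun t ht => (List.mem_append.1 ht).elim (hl₁ t) (hl₂ t))
    List.prod_append

theorem refLen_eq_one_iff (hW : IsReflectionGroup W) {w : W} :
    refLen W w = 1 ↔ IsReflection w.1 := by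
  refine ⟨fun h => ?_, fun h => ?_⟩
  · obtain ⟨l, hlen, hl, hprod⟩ := hW.exists_length_eq_refLen w
    obtain ⟨t, rfl⟩ := List.length_eq_one_iff.1 (hlen.trans h)
    rw [List.prod_singleton] at hprod
    exact hprod ▸ hl t (List.mem_singleton_self t)
  · have hne : refLen W w ≠ 0 := fun h0 =>
      h.ne_one (congrArg Subtype.val ((refLen_eq_zero_iff hW).1 h0))
    have hle : refLen W w ≤ 1 := refLen_le_length (l := [w]) (by simpa using h) (by simp)
    omega

theorem refLen_inv_mul_ne_zero (hW : IsReflectionGroup W) {u v : W} (h : u ≠ v) :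
    refLen W (u⁻¹ * v) ≠ 0 := by
  rwa [Ne, refLen_eq_zero_iff hW, inv_mul_eq_one]

theorem covers_of_absLe_of_refLen_eq_succ (hW : IsReflectionGroup W) {u v : W}
    (huv : absLe W u v) (hlen : refLen W v = refLen W u + 1) : covers W u v := by
  refine ⟨huv, fun h => by simp [h] at hlen, fun z huz hzv => ?_⟩
  unfold absLe at huz hzv
  by_contra! hz
  have := refLen_inv_mul_ne_zero hW hz.1.symm
  have := refLen_inv_mul_ne_zero hW hz.2
  omega

theorem covers_mul_of_refLen_mul_eq_succ (hW : IsReflectionGroup W) {u r : W}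
    (hr : IsReflection r.1) (hlen : refLen W (u * r) = refLen W u + 1) : covers W u (u * r) :=
  covers_of_absLe_of_refLen_eq_succ hW
    (by rw [absLe, inv_mul_cancel_left, (refLen_eq_one_iff hW).2 hr, hlen]) hlen

end ReflectionLength

theorem statement7_general {V : Type*} [NormedAddCommGroup V] [InnerProductSpace ℝ V]
    (W : Subgroup (V ≃ₗᵢ[ℝ] V)) (hW : IsReflectionGroup W)
    (u v : W)
    (hlen : refLen W v = refLen W u + 2)
    (s t z : W) (hz1 : covers W u z) (hz2 : covers W z v)
    (hs : u⁻¹ * z = s) (ht : z⁻¹ * v = t) :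
    ∃ s' : W, s' = t * s * t ∧ IsReflection s'.1 ∧
      covers W u (u * t) ∧ covers W (u * t) v ∧ (u * t)⁻¹ * v = s' := by
  obtain ⟨hsz, hs0⟩ : refLen W u + refLen W s = refLen W z ∧ refLen W s ≠ 0 :=
    ⟨hs ▸ hz1.1, hs ▸ refLen_inv_mul_ne_zero hW hz1.2.1⟩
  obtain ⟨htv, ht0⟩ : refLen W z + refLen W t = refLen W v ∧ refLen W t ≠ 0 :=
    ⟨ht ▸ hz2.1, ht ▸ refLen_inv_mul_ne_zero hW hz2.2.1⟩
  have hsr : IsReflection s.1 := (refLen_eq_one_iff hW).1 (by omega)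
  have htr : IsReflection t.1 := (refLen_eq_one_iff hW).1 (by omega)
  have hs'r : IsReflection (t * s * t).1 := by
    have := hsr.conj t.1
    rwa [htr.inv_eq] at this
  have hv_eq : v = u * t * (t * s * t) := by
    have htt : t * t = 1 := Subtype.ext htr.mul_self
    rw [eq_mul_of_inv_mul_eq ht, eq_mul_of_inv_mul_eq hs,
      show u * t * (t * s * t) = u * (t * t) * s * t by group, htt, mul_one]
  have hut : refLen W (u * t) = refLen W u + 1 := by
    have := refLen_mul_le hW u t
    have := refLen_mul_le hW (u * t) (t * s * t)
    rw [← hv_eq, (refLen_eq_one_iff hW).2 hs'r] at this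
    omega
  refine ⟨t * s * t, rfl, hs'r, covers_mul_of_refLen_mul_eq_succ hW htr hut, ?_,
    by rw [hv_eq]; group⟩
  have hv₁ : refLen W (u * t * (t * s * t)) = refLen W (u * t) + 1 := by rw [← hv_eq]; omega
  rw [hv_eq]
  exact covers_mul_of_refLen_mul_eq_succ hW hs'r hv₁

/-- In the natural edge labeling of `NC_W(γ)`, if `[u, v]` has length two and
`(s, t)` labels a maximal chain `u ⋖ z ⋖ v`, then `(t, s')` with `s' = t * s * t`
labels the maximal chain `u ⋖ u * t ⋖ v` of `[u, v]`. -/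
theorem statement7 {V : Type*} [NormedAddCommGroup V] [InnerProductSpace ℝ V]
    [FiniteDimensional ℝ V]
    (W : Subgroup (V ≃ₗᵢ[ℝ] V)) (hW : IsReflectionGroup W)
    (Φ : Set V) (hΦ : IsRootSystemFor W Φ)
    (γ : W) (hγ : IsCoxeterElement W Φ (Module.finrank ℝ V) γ)
    (u v : W) (huv : absLe W u v) (hvγ : absLe W v γ)
    (hlen : refLen W v = refLen W u + 2)
    (s t z : W) (hz1 : covers W u z) (hz2 : covers W z v)
    (hs : u⁻¹ * z = s) (ht : z⁻¹ * v = t) :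
    ∃ s' : W, s' = t * s * t ∧ IsReflection s'.1 ∧
      covers W u (u * t) ∧ covers W (u * t) v ∧ (u * t)⁻¹ * v = s' :=
  statement7_general W hW u v hlen s t z hz1 hz2 hs ht
end

section
/- In the symmetric group S_n with Coxeter element the n-cycle γ = (1, 2, ..., n), any total order on transpositions satisfying (i,j) < (i,k) < (j,k) for all 1 ≤ i < j < k ≤ n (e.g., the lexicographic order) makes the natural edge labeling λ(u,v) = u⁻¹v of the interval [1, γ] in absolute order an EL-labeling. -/
noncomputable section

/-- Reflection length in the symmetric group: the least number of transpositions
whose product is `w`. -/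
def permRefLen {n : ℕ} (w : Equiv.Perm (Fin n)) : ℕ :=
  sInf {k | ∃ l : List (Equiv.Perm (Fin n)),
    l.length = k ∧ (∀ t ∈ l, t.IsSwap) ∧ l.prod = w}

/-- The absolute order on the symmetric group. -/
def permAbsLe {n : ℕ} (u v : Equiv.Perm (Fin n)) : Prop :=
  permRefLen u + permRefLen (u⁻¹ * v) = permRefLen v

/-- Covering relation of the absolute order on the symmetric group. -/
def permCovers {n : ℕ} (u v : Equiv.Perm (Fin n)) : Prop :=
  permAbsLe u v ∧ u ≠ v ∧ ∀ z, permAbsLe u z → permAbsLe z v → z = u ∨ z = v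

/-- `l` is a maximal (saturated) chain from `u` to `v` in absolute order. -/
def permMaxChain {n : ℕ} (u v : Equiv.Perm (Fin n))
    (l : List (Equiv.Perm (Fin n))) : Prop :=
  l.head? = some u ∧ l.getLast? = some v ∧ l.Chain' permCovers

/-- The label of a chain under the natural edge labeling `λ (x, y) = x⁻¹ * y`. -/
def permLabels {n : ℕ} (l : List (Equiv.Perm (Fin n))) : List (Equiv.Perm (Fin n)) :=
  l.zipWith (fun x y => x⁻¹ * y) l.tail


/-!
An element `w` has reflection length `n - (number of cycles of w)`, so a transposition
`(a b)` lies below `w` in absolute order iff `a` and `b` share a cycle of `w`, and then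
`(a b) * w` splits that cycle into the arcs `a → ⋯ → w⁻¹ b` and `b → ⋯ → w⁻¹ a`.
Below the Coxeter element `γ` every cycle runs through its elements in the cyclic order
of `Fin n`, and this survives splitting. Maximal chains of `[u, v]` are the partial products
of reduced words of `u⁻¹ v`, and labels are the letters, so everything reduces to reduced
words of such a `w`. The compatibility `(i j) < (i k) < (j k)` yields the key step: if some
transposition below `w` precedes a transposition `t ≤ w`, then some transposition below
`t⁻¹ w` precedes `t` as well. Hence a rising reduced word must start with the least
transposition below `w`; by induction on length the greedy word is the unique rising one,
and it is lexicographically first.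
-/

open Equiv Equiv.Perm

lemma Equiv.Perm.IsSwap.conj {α : Type*} [DecidableEq α] {t : Perm α} (h : t.IsSwap)
    (g : Perm α) : (g * t * g⁻¹).IsSwap := by
  obtain ⟨a, b, hab, rfl⟩ := h
  exact ⟨g a, g b, g.injective.ne hab, (swap_apply_apply g a b).symm⟩

lemma Equiv.Perm.IsSwap.exists_lt {α : Type*} [LinearOrder α] {t : Perm α} (ht : t.IsSwap) :
    ∃ x y, x < y ∧ t = swap x y := by
  obtain ⟨x, y, hxy, rfl⟩ := ht
  rcases hxy.lt_or_gt with h | h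
  exacts [⟨x, y, h, rfl⟩, ⟨y, x, h, swap_comm x y⟩]

lemma List.foldl_mul_eq_mul_prod {M : Type*} [Monoid M] (a : M) (l : List M) :
    l.foldl (· * ·) a = a * l.prod := by
  induction l generalizing a <;> simp [*, mul_assoc]

section ReflectionLength

variable {n : ℕ} {w : Perm (Fin n)} {l : List (Perm (Fin n))}

def IsReducedWord (w : Perm (Fin n)) (l : List (Perm (Fin n))) : Prop :=
  (∀ t ∈ l, t.IsSwap) ∧ l.prod = w ∧ l.length = permRefLen w

lemma exists_isReducedWord (w : Perm (Fin n)) : ∃ l, IsReducedWord w l := by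
  obtain ⟨l, hprod, hswap⟩ := (truncSwapFactors w).out
  obtain ⟨l', hlen, hswap', hprod'⟩ := Nat.sInf_mem (s := {k | ∃ l : List (Perm (Fin n)),
    l.length = k ∧ (∀ t ∈ l, t.IsSwap) ∧ l.prod = w}) ⟨_, l, rfl, hswap, hprod⟩
  exact ⟨l', hswap', hprod', hlen⟩

lemma permRefLen_le_length (hswap : ∀ t ∈ l, t.IsSwap) (hprod : l.prod = w) :
    permRefLen w ≤ l.length :=
  Nat.sInf_le ⟨l, rfl, hswap, hprod⟩

lemma permRefLen_eq_zero_iff : permRefLen w = 0 ↔ w = 1 := by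
  refine ⟨fun h => ?_, ?_⟩
  · obtain ⟨l, -, rfl, hl⟩ := exists_isReducedWord w
    rw [h, List.length_eq_zero_iff] at hl
    simp [hl]
  · rintro rfl
    exact Nat.le_zero.1 (permRefLen_le_length (l := []) (by simp) rfl)

@[simp] lemma permRefLen_one : permRefLen (1 : Perm (Fin n)) = 0 :=
  permRefLen_eq_zero_iff.2 rfl

lemma permRefLen_mul_le (x y : Perm (Fin n)) :
    permRefLen (x * y) ≤ permRefLen x + permRefLen y := by
  obtain ⟨lx, hsx, rfl, hlx⟩ := exists_isReducedWord x
  obtain ⟨ly, hsy, rfl, hly⟩ := exists_isReducedWord y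
  rw [← hlx, ← hly, ← List.length_append]
  exact permRefLen_le_length (by simpa [or_imp, forall_and] using ⟨hsx, hsy⟩) List.prod_append

lemma permRefLen_conj_le (g x : Perm (Fin n)) : permRefLen (g * x * g⁻¹) ≤ permRefLen x := by
  obtain ⟨l, hs, rfl, hl⟩ := exists_isReducedWord x
  rw [← hl, ← List.length_map (MulAut.conj g), ← MulAut.conj_apply]
  refine permRefLen_le_length ?_ (map_list_prod _ _).symm
  simpa using fun t ht => (hs t ht).conj g

lemma permRefLen_conj (g x : Perm (Fin n)) : permRefLen (g * x * g⁻¹) = permRefLen x :=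
  (permRefLen_conj_le g x).antisymm <| by
    simpa [mul_assoc] using permRefLen_conj_le g⁻¹ (g * x * g⁻¹)

lemma permRefLen_eq_one_iff {t : Perm (Fin n)} : permRefLen t = 1 ↔ t.IsSwap := by
  constructor
  · intro h
    obtain ⟨l, hs, rfl, hl⟩ := exists_isReducedWord t
    obtain ⟨s, rfl⟩ := List.length_eq_one_iff.1 (hl.trans h)
    simpa using hs s (by simp)
  · intro ht
    refine le_antisymm ?_ (Nat.one_le_iff_ne_zero.2 fun h => ht.isCycle.ne_one
      (permRefLen_eq_zero_iff.1 h))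
    simpa using permRefLen_le_length (l := [t]) (by simpa using ht) (by simp)

end ReflectionLength

namespace Equiv.Perm

variable {α : Type*} {w : Perm α} {a b x y : α}

/-- The number of steps from `a` to `b` along `w` (`0` if `b` is not in the cycle of `a`). -/
def cycleDist (w : Perm α) (a b : α) : ℕ := sInf {k | (w ^ k) a = b}

def arc (w : Perm α) (a b : α) : Set α := {x | ∃ i < cycleDist w a b, (w ^ i) a = x}

lemma pow_apply_ne_of_lt_cycleDist {i : ℕ} (hi : i < cycleDist w a b) : (w ^ i) a ≠ b :=
  Nat.notMem_of_lt_sInf hi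

lemma right_notMem_arc : b ∉ arc w a b := fun ⟨_, hi, hb⟩ => pow_apply_ne_of_lt_cycleDist hi hb

lemma SameCycle.of_mem_arc (hx : x ∈ arc w a b) : w.SameCycle a x := by
  obtain ⟨i, -, rfl⟩ := hx
  exact sameCycle_pow_right.2 (.refl w a)

section Finite

variable [Finite α]

theorem SameCycle.induction_on {P : α → Prop} (hx : w.SameCycle a x) (h0 : P a)
    (hstep : ∀ y, w.SameCycle a y → P y → P (w y)) : P x := by
  obtain ⟨k, rfl⟩ := hx.exists_nat_pow_eq
  clear hx
  induction k with
  | zero => exact h0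
  | succ k ih =>
    rw [pow_succ', mul_apply]
    exact hstep _ (sameCycle_pow_right.2 (.refl w a)) ih

lemma pow_cycleDist_apply (h : w.SameCycle a b) : (w ^ cycleDist w a b) a = b :=
  Nat.sInf_mem (s := {k | (w ^ k) a = b}) h.exists_nat_pow_eq

lemma cycleDist_pos (hab : a ≠ b) (h : w.SameCycle a b) : 0 < cycleDist w a b :=
  Nat.pos_of_ne_zero fun h0 => hab (by simpa [h0] using pow_cycleDist_apply h)

lemma pow_apply_ne_self_of_lt_cycleDist (h : w.SameCycle a b) {i : ℕ} (hi0 : 0 < i)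
    (hi : i < cycleDist w a b) : (w ^ i) a ≠ a := by
  intro hfix
  refine pow_apply_ne_of_lt_cycleDist (w := w) (a := a) (b := b) (i := cycleDist w a b - i)
    (by omega) ?_
  conv_rhs => rw [← pow_cycleDist_apply h, ← Nat.sub_add_cancel hi.le, pow_add, mul_apply, hfix]

lemma left_mem_arc (hab : a ≠ b) (h : w.SameCycle a b) : a ∈ arc w a b :=
  ⟨0, cycleDist_pos hab h, rfl⟩

lemma apply_mem_arc_or_eq (h : w.SameCycle a b) (hx : x ∈ arc w a b) :
    w x ∈ arc w a b ∨ w x = b := by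
  obtain ⟨i, hi, rfl⟩ := hx
  rw [← mul_apply, ← pow_succ']
  rcases (show i + 1 ≤ cycleDist w a b from hi).eq_or_lt with hd | hd
  · exact Or.inr (hd ▸ pow_cycleDist_apply h)
  · exact Or.inl ⟨i + 1, hd, rfl⟩

lemma mem_arc_or_mem_arc (hab : a ≠ b) (h : w.SameCycle a b) (hx : w.SameCycle a x) :
    x ∈ arc w a b ∨ x ∈ arc w b a := by
  refine hx.induction_on (P := fun x => x ∈ arc w a b ∨ x ∈ arc w b a)
    (Or.inl (left_mem_arc hab h)) fun y _ hy => ?_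
  rcases hy with hy | hy
  · refine (apply_mem_arc_or_eq h hy).imp_right fun hwy => ?_
    rw [hwy]
    exact left_mem_arc hab.symm h.symm
  · refine (apply_mem_arc_or_eq h.symm hy).symm.imp_left fun hwy => ?_
    rw [hwy]
    exact left_mem_arc hab h

end Finite

section Swap

variable [DecidableEq α]

lemma swap_mul_apply_of_not_sameCycle (h : w.SameCycle a b) (hx : ¬ w.SameCycle a x) :
    (swap a b * w) x = w x := by
  have hwx : ¬ w.SameCycle a (w x) := sameCycle_apply_right.not.2 hx
  exact swap_apply_of_ne_of_ne (fun e => hwx (e ▸ .refl w a)) (fun e => hwx (e ▸ h))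

variable [Finite α]

lemma swap_mul_apply_pow_of_succ_lt (h : w.SameCycle a b) {i : ℕ}
    (hi : i + 1 < cycleDist w a b) : (swap a b * w) ((w ^ i) a) = (w ^ (i + 1)) a := by
  rw [mul_apply, ← mul_apply w, ← pow_succ']
  exact swap_apply_of_ne_of_ne (pow_apply_ne_self_of_lt_cycleDist h (Nat.succ_pos i) hi)
    (pow_apply_ne_of_lt_cycleDist hi)

lemma swap_mul_pow_apply_of_lt_cycleDist (h : w.SameCycle a b) {i : ℕ}
    (hi : i < cycleDist w a b) : ((swap a b * w) ^ i) a = (w ^ i) a := by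
  induction i with
  | zero => rfl
  | succ i ih => rw [pow_succ', mul_apply, ih (by omega), swap_mul_apply_pow_of_succ_lt h hi]

lemma swap_mul_apply_mem_arc (hab : a ≠ b) (h : w.SameCycle a b) (hx : x ∈ arc w a b) :
    (swap a b * w) x ∈ arc w a b := by
  obtain ⟨i, hi, rfl⟩ := hx
  rcases (show i + 1 ≤ cycleDist w a b from hi).eq_or_lt with hd | hd
  · rw [mul_apply, ← mul_apply w, ← pow_succ', hd, pow_cycleDist_apply h, swap_apply_right]
    exact left_mem_arc hab h
  · exact ⟨i + 1, hd, (swap_mul_apply_pow_of_succ_lt h hd).symm⟩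

lemma swap_mul_apply_of_mem_arc (h : w.SameCycle a b) (hx : x ∈ arc w a b) (hwx : w x ≠ b) :
    (swap a b * w) x = w x := by
  obtain ⟨i, hi, rfl⟩ := hx
  have hi' : i + 1 < cycleDist w a b := by
    refine lt_of_le_of_ne hi fun hd => hwx ?_
    rw [← mul_apply, ← pow_succ', hd, pow_cycleDist_apply h]
  rw [swap_mul_apply_pow_of_succ_lt h hi', pow_succ', mul_apply]

lemma sameCycle_swap_mul_iff_mem_arc (hab : a ≠ b) (h : w.SameCycle a b) :
    (swap a b * w).SameCycle a x ↔ x ∈ arc w a b := by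
  refine ⟨fun hx => hx.induction_on (left_mem_arc hab h) fun y _ hy =>
    swap_mul_apply_mem_arc hab h hy, ?_⟩
  rintro ⟨i, hi, rfl⟩
  rw [← swap_mul_pow_apply_of_lt_cycleDist h hi]
  exact sameCycle_pow_right.2 (.refl _ a)

lemma sameCycle_swap_mul_iff_of_not_sameCycle (h : w.SameCycle a b) (hx : ¬ w.SameCycle a x) :
    (swap a b * w).SameCycle x y ↔ w.SameCycle x y := by
  have hw' : ∀ z, w.SameCycle x z → (swap a b * w) z = w z := fun z hz =>
    swap_mul_apply_of_not_sameCycle h fun haz => hx (haz.trans hz.symm)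
  constructor
  · intro hxy
    refine hxy.induction_on (.refl w x) fun z _ hz => ?_
    rw [hw' z hz]
    exact sameCycle_apply_right.2 hz
  · intro hxy
    refine hxy.induction_on (.refl _ x) fun z hz ihz => ?_
    rw [← hw' z hz]
    exact sameCycle_apply_right.2 ihz

lemma sameCycle_swap_mul_of_not_sameCycle (hns : ¬ w.SameCycle a b) :
    (swap a b * w).SameCycle a b := by
  have key : ∀ z, w.SameCycle a z → (swap a b * w).SameCycle a z := fun z hz =>
    hz.induction_on (.refl _ a) fun y hy ihy => by
      by_cases hwy : w y = a
      · rw [hwy]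
      · have hwy' : w y ≠ b := fun e => hns (e ▸ sameCycle_apply_right.2 hy)
        rw [← swap_apply_of_ne_of_ne hwy hwy', ← mul_apply]
        exact sameCycle_apply_right.2 ihy
  simpa using sameCycle_apply_right.2 (key _ (sameCycle_symm_apply_right.2 (.refl w a)))

end Swap

section NumCycles

variable [DecidableEq α] [Fintype α]

def cycleClass (w : Perm α) (x : α) : Finset α := Finset.univ.filter (w.SameCycle x)

@[simp] lemma mem_cycleClass : y ∈ cycleClass w x ↔ w.SameCycle x y := by simp [cycleClass]

lemma SameCycle.cycleClass_eq (h : w.SameCycle x y) : cycleClass w x = cycleClass w y := by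
  ext z
  simp only [mem_cycleClass]
  exact ⟨h.symm.trans, h.trans⟩

/-- The number of cycles of `w`, fixed points included. -/
def numCycles (w : Perm α) : ℕ := (Finset.univ.image (cycleClass w)).card

lemma numCycles_one : numCycles (1 : Perm α) = Fintype.card α := by
  refine Finset.card_image_of_injective _ fun x y hxy => ?_
  simpa using (Finset.ext_iff.1 hxy y).2 (by simp)

lemma numCycles_le (w : Perm α) : numCycles w ≤ Fintype.card α := Finset.card_image_le

lemma numCycles_eq_card_add_card (v : Perm α) (a : α)
    (hout : ∀ x, ¬ w.SameCycle a x → cycleClass v x = cycleClass w x) :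
    numCycles v = ((Finset.univ.filter (w.SameCycle a)).image (cycleClass v)).card +
      ((Finset.univ.filter fun x => ¬ w.SameCycle a x).image (cycleClass w)).card := by
  rw [numCycles]
  conv_lhs => rw [← Finset.filter_union_filter_not_eq (w.SameCycle a) Finset.univ,
    Finset.image_union, Finset.image_congr fun x hx => hout x (Finset.mem_filter.1 hx).2]
  refine Finset.card_union_of_disjoint (Finset.disjoint_left.2 ?_)
  simp only [Finset.mem_image, Finset.mem_filter, Finset.mem_univ, true_and]
  rintro _ ⟨y, hay, rfl⟩ ⟨x, hax, hxy⟩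
  have hy : y ∈ cycleClass w x := hxy ▸ (mem_cycleClass.2 (.refl v y))
  exact hax (hay.trans (mem_cycleClass.1 hy).symm)

lemma image_cycleClass_of_sameCycle (a : α) :
    (Finset.univ.filter (w.SameCycle a)).image (cycleClass w) = {cycleClass w a} := by
  ext C
  simp only [Finset.mem_image, Finset.mem_filter, Finset.mem_univ, true_and,
    Finset.mem_singleton]
  exact ⟨fun ⟨x, hx, hC⟩ => hC ▸ hx.symm.cycleClass_eq, fun hC => ⟨a, .refl w a, hC.symm⟩⟩

lemma image_cycleClass_swap_mul (hab : a ≠ b) (h : w.SameCycle a b) :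
    (Finset.univ.filter (w.SameCycle a)).image (cycleClass (swap a b * w)) =
      {cycleClass (swap a b * w) a, cycleClass (swap a b * w) b} := by
  ext C
  simp only [Finset.mem_image, Finset.mem_filter, Finset.mem_univ, true_and,
    Finset.mem_insert, Finset.mem_singleton]
  constructor
  · rintro ⟨x, hx, rfl⟩
    rcases mem_arc_or_mem_arc hab h hx with hx | hx
    · exact Or.inl ((sameCycle_swap_mul_iff_mem_arc hab h).2 hx).symm.cycleClass_eq
    · rw [← sameCycle_swap_mul_iff_mem_arc hab.symm h.symm, swap_comm] at hx
      exact Or.inr hx.symm.cycleClass_eq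
  · rintro (rfl | rfl)
    exacts [⟨a, .refl w a, rfl⟩, ⟨b, h, rfl⟩]

lemma numCycles_swap_mul (hab : a ≠ b) (h : w.SameCycle a b) :
    numCycles (swap a b * w) = numCycles w + 1 := by
  have hout : ∀ x, ¬ w.SameCycle a x → cycleClass (swap a b * w) x = cycleClass w x :=
    fun x hx => by
      ext y
      simp only [mem_cycleClass, sameCycle_swap_mul_iff_of_not_sameCycle h hx]
  have hab' : cycleClass (swap a b * w) a ≠ cycleClass (swap a b * w) b := fun e =>
    right_notMem_arc ((sameCycle_swap_mul_iff_mem_arc hab h).1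
      (mem_cycleClass.1 (e ▸ mem_cycleClass.2 (.refl _ b))))
  rw [numCycles_eq_card_add_card _ a hout, numCycles_eq_card_add_card w a fun _ _ => rfl,
    image_cycleClass_swap_mul hab h, image_cycleClass_of_sameCycle, Finset.card_pair hab',
    Finset.card_singleton]
  omega

lemma numCycles_swap_mul_of_not_sameCycle (hns : ¬ w.SameCycle a b) :
    numCycles (swap a b * w) + 1 = numCycles w := by
  have hab : a ≠ b := fun e => hns (e ▸ .refl w a)
  simpa [← mul_assoc] using
    (numCycles_swap_mul hab (sameCycle_swap_mul_of_not_sameCycle hns)).symm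

end NumCycles

lemma exists_sameCycle_forall_le [Fintype α] [LinearOrder α] (w : Perm α) (x : α) :
    ∃ μ, w.SameCycle x μ ∧ ∀ z, w.SameCycle μ z → μ ≤ z := by
  obtain ⟨μ, hμ, hmin⟩ := (Finset.univ.filter (w.SameCycle x)).exists_min_image id
    ⟨x, Finset.mem_filter.2 ⟨Finset.mem_univ x, .refl w x⟩⟩
  simp only [Finset.mem_filter, Finset.mem_univ, true_and, id] at hμ hmin
  exact ⟨μ, hμ, fun z hz => hmin z (hμ.trans hz)⟩

end Equiv.Perm

section AbsoluteOrder

variable {n : ℕ} {u v w t : Perm (Fin n)} {a b : Fin n}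

lemma le_length_add_numCycles (l : List (Perm (Fin n))) (hl : ∀ t ∈ l, t.IsSwap) :
    n ≤ l.length + numCycles l.prod := by
  induction l with
  | nil => simp [numCycles_one]
  | cons t l ih =>
    obtain ⟨a, b, hab, rfl⟩ := hl t List.mem_cons_self
    have := ih fun s hs => hl s (List.mem_cons_of_mem _ hs)
    rw [List.prod_cons, List.length_cons]
    by_cases h : l.prod.SameCycle a b
    · have := numCycles_swap_mul hab h
      omega
    · have := numCycles_swap_mul_of_not_sameCycle h
      omega

lemma permRefLen_add_numCycles_le (w : Perm (Fin n)) : permRefLen w + numCycles w ≤ n := by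
  induction hk : n - numCycles w using Nat.strong_induction_on generalizing w with
  | _ k ih =>
    by_cases hw : w = 1
    · simp [hw, numCycles_one]
    obtain ⟨x, hx⟩ : ∃ x, w x ≠ x := not_forall.1 fun h => hw (Equiv.ext h)
    have hsplit := numCycles_swap_mul (Ne.symm hx) (sameCycle_apply_right.2 (.refl w x))
    have hle := numCycles_le (swap x (w x) * w)
    have hlen : permRefLen w ≤ 1 + permRefLen (swap x (w x) * w) := by
      calc permRefLen w = permRefLen (swap x (w x) * (swap x (w x) * w)) := by
            rw [swap_mul_self_mul]
        _ ≤ _ := permRefLen_mul_le _ _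
        _ = _ := by rw [permRefLen_eq_one_iff.2 ⟨x, w x, hx.symm, rfl⟩]
    have := ih _ (by rw [Fintype.card_fin] at hle; omega) (swap x (w x) * w) rfl
    omega

theorem permRefLen_add_numCycles (w : Perm (Fin n)) : permRefLen w + numCycles w = n := by
  refine (permRefLen_add_numCycles_le w).antisymm ?_
  obtain ⟨l, hswap, rfl, hl⟩ := exists_isReducedWord w
  simpa [hl] using le_length_add_numCycles l hswap

lemma permRefLen_swap_mul_of_sameCycle (hab : a ≠ b) (h : w.SameCycle a b) :
    permRefLen (swap a b * w) + 1 = permRefLen w := by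
  have := numCycles_swap_mul hab h
  have := permRefLen_add_numCycles w
  have := permRefLen_add_numCycles (swap a b * w)
  omega

lemma permRefLen_swap_mul_of_not_sameCycle (hns : ¬ w.SameCycle a b) :
    permRefLen (swap a b * w) = permRefLen w + 1 := by
  have := numCycles_swap_mul_of_not_sameCycle hns
  have := permRefLen_add_numCycles w
  have := permRefLen_add_numCycles (swap a b * w)
  omega

theorem permAbsLe_swap_iff (hab : a ≠ b) : permAbsLe (swap a b) w ↔ w.SameCycle a b := by
  rw [permAbsLe, permRefLen_eq_one_iff.2 ⟨a, b, hab, rfl⟩, swap_inv]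
  by_cases h : w.SameCycle a b
  · have := permRefLen_swap_mul_of_sameCycle hab h
    simp only [h, iff_true]
    omega
  · have := permRefLen_swap_mul_of_not_sameCycle h
    simp only [h, iff_false]
    omega

lemma permAbsLe_trans (huv : permAbsLe u v) (hvw : permAbsLe v w) : permAbsLe u w := by
  unfold permAbsLe at *
  have h1 := permRefLen_mul_le (u⁻¹ * v) (v⁻¹ * w)
  have h2 := permRefLen_mul_le u (u⁻¹ * w)
  simp only [mul_assoc, mul_inv_cancel_left] at h1 h2
  omega

lemma permAbsLe_inv_mul (h : permAbsLe u v) : permAbsLe (u⁻¹ * v) v := by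
  unfold permAbsLe at *
  rw [show (u⁻¹ * v)⁻¹ * v = v⁻¹ * u * v⁻¹⁻¹ by group, permRefLen_conj]
  omega

lemma permAbsLe_mul_of_permAbsLe_inv_mul (huv : permAbsLe u v) {x : Perm (Fin n)}
    (hx : permAbsLe x (u⁻¹ * v)) : permAbsLe u (u * x) ∧ permAbsLe (u * x) v := by
  unfold permAbsLe at *
  have h1 := permRefLen_mul_le u x
  have h2 := permRefLen_mul_le (u * x) ((u * x)⁻¹ * v)
  simp only [mul_inv_rev, inv_mul_cancel_left, mul_assoc, mul_inv_cancel_left] at h1 h2 hx ⊢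
  omega

lemma not_permAbsLe_one (ht : t.IsSwap) : ¬ permAbsLe t 1 := by
  simp [permAbsLe, permRefLen_eq_one_iff.2 ht]

lemma not_permAbsLe_inv_mul (ht : t.IsSwap) (htw : permAbsLe t w) :
    ¬ permAbsLe t (t⁻¹ * w) := by
  have h1 := permRefLen_eq_one_iff.2 ht
  obtain ⟨a, b, -, rfl⟩ := ht
  unfold permAbsLe at *
  rw [swap_inv] at htw ⊢
  rw [swap_mul_self_mul]
  omega

lemma exists_isSwap_permAbsLe (hw : w ≠ 1) : ∃ t, t.IsSwap ∧ permAbsLe t w := by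
  obtain ⟨x, hx⟩ : ∃ x, w x ≠ x := not_forall.1 fun h => hw (Equiv.ext h)
  exact ⟨swap x (w x), ⟨x, w x, hx.symm, rfl⟩,
    (permAbsLe_swap_iff hx.symm).2 (sameCycle_apply_right.2 (.refl w x))⟩

theorem permCovers_iff :
    permCovers u v ↔ (u⁻¹ * v).IsSwap ∧ permRefLen v = permRefLen u + 1 := by
  constructor
  · rintro ⟨huv, hne, hmax⟩
    obtain ⟨t, ht, htw⟩ := exists_isSwap_permAbsLe (w := u⁻¹ * v) fun h => hne (by
      rw [← mul_inv_cancel_left u v, h, mul_one])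
    obtain ⟨hut, htv⟩ := permAbsLe_mul_of_permAbsLe_inv_mul huv htw
    rcases hmax _ hut htv with h | rfl
    · exact absurd (mul_eq_left.1 h) ht.isCycle.ne_one
    · unfold permAbsLe at hut
      rw [inv_mul_cancel_left, permRefLen_eq_one_iff.2 ht] at hut
      rw [inv_mul_cancel_left]
      exact ⟨ht, hut.symm⟩
  · rintro ⟨ht, hlen⟩
    have h1 := permRefLen_eq_one_iff.2 ht
    refine ⟨by unfold permAbsLe; omega, fun h => ht.isCycle.ne_one (by rw [h, inv_mul_cancel]),
      fun z huz hzv => ?_⟩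
    unfold permAbsLe at huz hzv
    rcases Nat.eq_zero_or_pos (permRefLen (u⁻¹ * z)) with h0 | h0
    · exact Or.inl (by rw [← mul_inv_cancel_left u z, permRefLen_eq_zero_iff.1 h0, mul_one])
    · have h0' : permRefLen (z⁻¹ * v) = 0 := by omega
      exact Or.inr (by rw [← mul_inv_cancel_left z v, permRefLen_eq_zero_iff.1 h0', mul_one])

end AbsoluteOrder

section ReducedWords

variable {n : ℕ} {w t s : Perm (Fin n)} {l : List (Perm (Fin n))}

lemma isReducedWord_nil_iff : IsReducedWord w [] ↔ w = 1 :=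
  ⟨fun h => h.2.1.symm, fun h => ⟨by simp, by simp [h], by simp [h]⟩⟩

lemma isReducedWord_cons_iff :
    IsReducedWord w (t :: l) ↔ t.IsSwap ∧ permAbsLe t w ∧ IsReducedWord (t⁻¹ * w) l := by
  unfold permAbsLe IsReducedWord
  simp only [List.forall_mem_cons, List.prod_cons, List.length_cons]
  constructor
  · rintro ⟨⟨ht, hl⟩, rfl, hlen⟩
    have h1 := permRefLen_le_length hl rfl
    have h2 := permRefLen_mul_le t l.prod
    rw [permRefLen_eq_one_iff.2 ht] at h2 ⊢
    rw [inv_mul_cancel_left]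
    exact ⟨ht, by omega, hl, rfl, by omega⟩
  · rintro ⟨ht, htw, hl, hprod, hlen⟩
    rw [permRefLen_eq_one_iff.2 ht] at htw
    exact ⟨⟨ht, hl⟩, by rw [hprod, mul_inv_cancel_left], by omega⟩

lemma IsReducedWord.permAbsLe_of_mem (hl : IsReducedWord w l) (hs : s ∈ l) : permAbsLe s w := by
  induction l generalizing w with
  | nil => simp at hs
  | cons t l ih =>
    obtain ⟨-, htw, hl'⟩ := isReducedWord_cons_iff.1 hl
    rcases List.mem_cons.1 hs with rfl | hs
    · exact htw
    · exact permAbsLe_trans (ih hl' hs) (permAbsLe_inv_mul htw)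

end ReducedWords

section IncreasingCycles

variable {n : ℕ} {v w t : Perm (Fin n)} {a b x : Fin n}

/-- Every cycle of `w` runs through its elements in the cyclic order of `Fin n`. -/
def HasIncreasingCycles (w : Perm (Fin n)) : Prop :=
  ∀ x y, w.SameCycle x y → ¬ sbtw x y (w x)

lemma hasIncreasingCycles_finRotate : HasIncreasingCycles (finRotate n) := by
  rcases n with _ | m
  · exact fun x => x.elim0
  intro x y _
  rw [finRotate_apply, sbtw_iff]
  simp only [Fin.lt_def, Fin.val_add_one]
  split_ifs with h <;> simp only [Fin.ext_iff, Fin.val_last] at h <;> omega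

namespace HasIncreasingCycles

lemma eq_or_sbtw_of_mem_arc (hw : HasIncreasingCycles w) (h : w.SameCycle a b)
    (hx : x ∈ arc w a b) : x = a ∨ sbtw a x b := by
  obtain ⟨i, hi, rfl⟩ := hx
  induction i with
  | zero => exact Or.inl rfl
  | succ i ih =>
    have hz := ih (by omega)
    have hzb : ¬ sbtw ((w ^ i) a) b (w ((w ^ i) a)) := hw _ _ (sameCycle_pow_left.2 h)
    have hne : (w ^ (i + 1)) a ≠ b := pow_apply_ne_of_lt_cycleDist hi
    rw [pow_succ', mul_apply] at hne ⊢
    have hz' : (w ^ i) a ≠ b := pow_apply_ne_of_lt_cycleDist (by omega)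
    simp only [sbtw_iff] at *
    omega

lemma mem_arc_iff (hw : HasIncreasingCycles w) (hab : a ≠ b) (h : w.SameCycle a b) :
    x ∈ arc w a b ↔ w.SameCycle a x ∧ (x = a ∨ sbtw a x b) := by
  refine ⟨fun hx => ⟨SameCycle.of_mem_arc hx, hw.eq_or_sbtw_of_mem_arc h hx⟩,
    fun ⟨hx, hx'⟩ => ?_⟩
  refine (mem_arc_or_mem_arc hab h hx).resolve_right fun hx'' => ?_
  have := hw.eq_or_sbtw_of_mem_arc h.symm hx''
  simp only [sbtw_iff] at *
  omega

/-- Two elements of the cycle through `a` and `b` stay in a common cycle of `swap a b * w`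
when they lie on the same side of the chord `a b`. -/
lemma sameCycle_swap_mul (hw : HasIncreasingCycles w) (hab : a ≠ b) (h : w.SameCycle a b)
    {c d : Fin n} (hc : w.SameCycle a c) (hd : w.SameCycle a d)
    (hcd : (c = a ∨ sbtw a c b) ↔ (d = a ∨ sbtw a d b)) : (swap a b * w).SameCycle c d := by
  by_cases hc' : c = a ∨ sbtw a c b
  · have hcarc := (hw.mem_arc_iff hab h).2 ⟨hc, hc'⟩
    have hdarc := (hw.mem_arc_iff hab h).2 ⟨hd, hcd.1 hc'⟩
    rw [← sameCycle_swap_mul_iff_mem_arc hab h] at hcarc hdarc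
    exact hcarc.symm.trans hdarc
  · have hcarc := (mem_arc_or_mem_arc hab h hc).resolve_left
      fun hx => hc' ((hw.mem_arc_iff hab h).1 hx).2
    have hdarc := (mem_arc_or_mem_arc hab h hd).resolve_left
      fun hx => (hcd.not.1 hc') ((hw.mem_arc_iff hab h).1 hx).2
    rw [← sameCycle_swap_mul_iff_mem_arc hab.symm h.symm, swap_comm] at hcarc hdarc
    exact hcarc.symm.trans hdarc

theorem swap_mul (hw : HasIncreasingCycles w) (hab : a ≠ b) (h : w.SameCycle a b) :
    HasIncreasingCycles (swap a b * w) := by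
  intro x y hxy
  by_cases hx : w.SameCycle a x
  swap
  · rw [swap_mul_apply_of_not_sameCycle h hx]
    exact hw x y ((sameCycle_swap_mul_iff_of_not_sameCycle h hx).1 hxy)
  wlog hxa : x ∈ arc w a b generalizing a b
  · rw [swap_comm] at hxy ⊢
    exact this hab.symm h.symm hxy (h.symm.trans hx)
      ((mem_arc_or_mem_arc hab h hx).resolve_left hxa)
  have hya : y ∈ arc w a b := (sameCycle_swap_mul_iff_mem_arc hab h).1
    (((sameCycle_swap_mul_iff_mem_arc hab h).2 hxa).trans hxy)
  have hxy' : w.SameCycle x y :=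
    (SameCycle.of_mem_arc hxa).symm.trans (SameCycle.of_mem_arc hya)
  by_cases hwx : w x = b
  · rw [mul_apply, hwx, swap_apply_right]
    have h1 := hw.eq_or_sbtw_of_mem_arc h hxa
    have h2 := hw.eq_or_sbtw_of_mem_arc h hya
    have h3 := hw x y hxy'
    rw [hwx] at h3
    simp only [sbtw_iff] at *
    omega
  · rw [swap_mul_apply_of_mem_arc h hxa hwx]
    exact hw x y hxy'

lemma of_swap_mul (hw : HasIncreasingCycles (t * w)) (ht : t.IsSwap)
    (hlen : permRefLen (t * w) = permRefLen w + 1) : HasIncreasingCycles w := by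
  obtain ⟨a, b, hab, rfl⟩ := ht
  have h : (swap a b * w).SameCycle a b := by
    by_contra hns
    have := permRefLen_swap_mul_of_not_sameCycle hns
    rw [swap_mul_self_mul] at this
    omega
  simpa [swap_mul_self_mul] using hw.swap_mul hab h

lemma of_list_prod_mul {l : List (Perm (Fin n))} (hl : ∀ t ∈ l, t.IsSwap)
    (hlen : permRefLen (l.prod * w) = l.length + permRefLen w)
    (hw : HasIncreasingCycles (l.prod * w)) : HasIncreasingCycles w := by
  induction l with
  | nil => simpa using hw
  | cons t l ih =>
    have hl' : ∀ s ∈ l, s.IsSwap := fun s hs => hl s (List.mem_cons_of_mem _ hs)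
    have ht := hl t List.mem_cons_self
    rw [List.prod_cons, mul_assoc] at hlen hw
    rw [List.length_cons] at hlen
    have h1 := permRefLen_mul_le l.prod w
    have h2 := permRefLen_le_length hl' rfl
    have h3 := permRefLen_mul_le t (l.prod * w)
    rw [permRefLen_eq_one_iff.2 ht] at h3
    exact ih hl' (by omega) (hw.of_swap_mul ht (by omega))

theorem of_permAbsLe (hv : HasIncreasingCycles v) (h : permAbsLe w v) :
    HasIncreasingCycles w := by
  obtain ⟨l, hswap, hprod, hl⟩ := exists_isReducedWord (v * w⁻¹)
  have hlen : permRefLen (v * w⁻¹) = permRefLen (w⁻¹ * v) := by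
    rw [show v * w⁻¹ = w * (w⁻¹ * v) * w⁻¹ by group, permRefLen_conj]
  refine of_list_prod_mul hswap ?_ (by rwa [hprod, inv_mul_cancel_right])
  unfold permAbsLe at h
  rw [hprod, inv_mul_cancel_right, hl, hlen]
  omega

end HasIncreasingCycles

end IncreasingCycles

section SwapOrder

variable {n : ℕ}

structure IsCompatibleSwapOrder (r : Perm (Fin n) → Perm (Fin n) → Prop) : Prop where
  asymm : ∀ s t, s.IsSwap → t.IsSwap → r s t → ¬ r t s
  trans : ∀ a b c, a.IsSwap → b.IsSwap → c.IsSwap → r a b → r b c → r a c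
  total : ∀ s t, s.IsSwap → t.IsSwap → s ≠ t → r s t ∨ r t s
  compat : ∀ i j k : Fin n, i < j → j < k →
    r (swap i j) (swap i k) ∧ r (swap i k) (swap j k)

namespace IsCompatibleSwapOrder

variable {r : Perm (Fin n) → Perm (Fin n) → Prop} {w t s : Perm (Fin n)}
  {l : List (Perm (Fin n))}

lemma exists_min (hr : IsCompatibleSwapOrder r) {S : Set (Perm (Fin n))} (hS : S.Nonempty)
    (hswap : ∀ s ∈ S, s.IsSwap) : ∃ m ∈ S, ∀ s ∈ S, s ≠ m → r m s := by
  let rS : Perm (Fin n) → Perm (Fin n) → Prop := fun s t => s ∈ S ∧ t ∈ S ∧ r s t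
  have : IsTrans _ rS := ⟨fun a b c hab hbc => ⟨hab.1, hbc.2.1,
    hr.trans a b c (hswap a hab.1) (hswap b hab.2.1) (hswap c hbc.2.1) hab.2.2 hbc.2.2⟩⟩
  have : Std.Irrefl rS := ⟨fun a h => hr.asymm a a (hswap a h.1) (hswap a h.1) h.2.2 h.2.2⟩
  obtain ⟨m, hm, hmin⟩ := (Finite.wellFounded_of_trans_of_irrefl rS).has_min S hS
  exact ⟨m, hm, fun s hs hsm => (hr.total m s (hswap m hm) (hswap s hs) hsm.symm).resolve_right
    fun h => hmin s hs ⟨hs, hm, h⟩⟩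

lemma rel_swap_swap (hr : IsCompatibleSwapOrder r) {μ ν p q : Fin n} (hμν : μ < ν) (hpq : p < q)
    (hνq : ν ≤ q) (hp : p = μ ∨ ν ≤ p) (hne : ¬ (p = μ ∧ q = ν)) :
    r (swap μ ν) (swap p q) := by
  have hsw : ∀ {i j : Fin n}, i < j → (swap i j).IsSwap := fun h => swap_isSwap_iff.2 h.ne
  rcases hp with rfl | hνp
  · exact (hr.compat p ν q hμν (hνq.lt_of_ne fun h => hne ⟨rfl, h.symm⟩)).1
  rcases hνp.eq_or_lt with rfl | hνp
  · exact hr.trans _ _ _ (hsw hμν) (hsw (hμν.trans hpq)) (hsw hpq)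
      (hr.compat μ ν q hμν hpq).1 (hr.compat μ ν q hμν hpq).2
  · have hμp := hμν.trans hνp
    have h := hr.compat μ p q hμp hpq
    exact hr.trans _ _ _ (hsw hμν) (hsw (hμp.trans hpq)) (hsw hpq)
      (hr.trans _ _ _ (hsw hμν) (hsw hμp) (hsw (hμp.trans hpq)) (hr.compat μ ν p hμν hνp).1 h.1)
      h.2

lemma rel_swap_apply (hr : IsCompatibleSwapOrder r) {w : Perm (Fin n)}
    (hw : HasIncreasingCycles w) {μ p q : Fin n} (hμ : ∀ z, w.SameCycle μ z → μ ≤ z)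
    (hpq : p < q) (hp : w.SameCycle μ p) (hq : w.SameCycle μ q)
    (hne : swap p q ≠ swap μ (w μ)) : r (swap μ (w μ)) (swap p q) := by
  have hsucc : ∀ z, w.SameCycle μ z → μ < z → w μ ≤ z := fun z hz hμz => by
    have h1 := hw μ z hz
    have h2 := hμ (w μ) (sameCycle_apply_right.2 (.refl w μ))
    simp only [sbtw_iff] at h1
    omega
  have hμp := hμ p hp
  have hμν : μ < w μ := (hμ _ (sameCycle_apply_right.2 (.refl w μ))).lt_of_ne fun h =>
    hpq.ne ((hp.eq_of_left h.symm).symm.trans (hq.eq_of_left h.symm))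
  refine hr.rel_swap_swap hμν hpq (hsucc q hq (hμp.trans_lt hpq)) ?_
    fun ⟨h1, h2⟩ => hne (by rw [h1, h2])
  rcases hμp.eq_or_lt with h | h
  exacts [Or.inl h.symm, Or.inr (hsucc p hp h)]

theorem exists_rel_permAbsLe_inv_mul (hr : IsCompatibleSwapOrder r) (hw : HasIncreasingCycles w)
    (hs : s.IsSwap) (hsw : permAbsLe s w) (ht : t.IsSwap) (htw : permAbsLe t w) (hst : r s t) :
    ∃ s', s'.IsSwap ∧ permAbsLe s' (t⁻¹ * w) ∧ r s' t := by
  obtain ⟨x, y, hxy, rfl⟩ := ht.exists_lt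
  obtain ⟨p, q, hpq, rfl⟩ := hs.exists_lt
  rw [swap_inv]
  rw [permAbsLe_swap_iff hxy.ne] at htw
  rw [permAbsLe_swap_iff hpq.ne] at hsw
  by_cases hxp : w.SameCycle x p
  swap
  · exact ⟨swap p q, hs, (permAbsLe_swap_iff hpq.ne).2
      ((sameCycle_swap_mul_iff_of_not_sameCycle htw hxp).2 hsw), hst⟩
  obtain ⟨μ, hμ, hμmin⟩ := w.exists_sameCycle_forall_le x
  rcases (hμmin x hμ.symm).lt_or_eq with hμx | rfl
  · have hμy := hμx.trans hxy
    refine ⟨swap μ y, swap_isSwap_iff.2 hμy.ne, (permAbsLe_swap_iff hμy.ne).2 ?_,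
      (hr.compat μ x y hμx hxy).2⟩
    refine hw.sameCycle_swap_mul hxy.ne htw hμ htw (iff_of_false ?_ ?_) <;>
      simp only [sbtw_iff] <;> omega
  have hμν : μ ≤ w μ := hμmin _ (sameCycle_apply_right.2 (.refl w μ))
  have hνy : w μ ≤ y := by
    have := hw μ y htw
    simp only [sbtw_iff] at this
    omega
  rcases hνy.lt_or_eq with hνy | rfl
  · have hμν' : μ < w μ := hμν.lt_of_ne fun h => hxy.ne (htw.eq_of_left h.symm)
    refine ⟨swap μ (w μ), swap_isSwap_iff.2 hμν'.ne, (permAbsLe_swap_iff hμν'.ne).2 ?_,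
      (hr.compat μ _ y hμν' hνy).1⟩
    exact hw.sameCycle_swap_mul hxy.ne htw (.refl w μ) (sameCycle_apply_right.2 (.refl w μ))
      (iff_of_true (Or.inl rfl) (Or.inr (by simp only [sbtw_iff]; omega)))
  · refine absurd hst (hr.asymm _ _ (swap_isSwap_iff.2 hxy.ne) hs
      (hr.rel_swap_apply hw hμmin hpq hxp (hxp.trans hsw) fun h => ?_))
    exact hr.asymm _ _ hs hs (h ▸ hst) (h ▸ hst)

lemma rel_of_isReducedWord_cons (hr : IsCompatibleSwapOrder r) (hw : HasIncreasingCycles w)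
    (hl : IsReducedWord w (t :: l)) (hp : (t :: l).Pairwise r) (hs : s.IsSwap)
    (hsw : permAbsLe s w) (hst : s ≠ t) : r t s := by
  induction l generalizing w t s with
  | nil =>
    obtain ⟨ht, htw, hl'⟩ := isReducedWord_cons_iff.1 hl
    refine (hr.total t s ht hs hst.symm).resolve_right fun hrst => ?_
    obtain ⟨s', hs', hs'w, -⟩ := hr.exists_rel_permAbsLe_inv_mul hw hs hsw ht htw hrst
    exact not_permAbsLe_one hs' (isReducedWord_nil_iff.1 hl' ▸ hs'w)
  | cons t₁ l ih =>
    obtain ⟨ht, htw, hl'⟩ := isReducedWord_cons_iff.1 hl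
    refine (hr.total t s ht hs hst.symm).resolve_right fun hrst => ?_
    obtain ⟨s', hs', hs'w, hrs't⟩ := hr.exists_rel_permAbsLe_inv_mul hw hs hsw ht htw hrst
    have ht₁ := (isReducedWord_cons_iff.1 hl').1
    have hrt₁t : r t₁ t := by
      by_cases h : s' = t₁
      · exact h ▸ hrs't
      · exact hr.trans _ _ _ ht₁ hs' ht
          (ih (hw.of_permAbsLe (permAbsLe_inv_mul htw)) hl' hp.of_cons hs' hs'w h) hrs't
    exact hr.asymm _ _ ht ht₁ (List.rel_of_pairwise_cons hp List.mem_cons_self) hrt₁t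

theorem exists_isReducedWord_pairwise (hr : IsCompatibleSwapOrder r)
    (hw : HasIncreasingCycles w) : ∃ l, IsReducedWord w l ∧ l.Pairwise r := by
  induction hk : permRefLen w generalizing w with
  | zero => exact ⟨[], isReducedWord_nil_iff.2 (permRefLen_eq_zero_iff.1 hk), .nil⟩
  | succ k ih =>
    obtain ⟨t₀, ht₀⟩ := exists_isSwap_permAbsLe fun h : w = 1 => by simp [h] at hk
    obtain ⟨t, ⟨ht, htw⟩, hmin⟩ :=
      hr.exists_min (S := {s | s.IsSwap ∧ permAbsLe s w}) ⟨t₀, ht₀⟩ fun s hs => hs.1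
    have hlen : permRefLen (t⁻¹ * w) = k := by
      unfold permAbsLe at htw
      rw [permRefLen_eq_one_iff.2 ht] at htw
      omega
    obtain ⟨l, hl, hp⟩ := ih (hw.of_permAbsLe (permAbsLe_inv_mul htw)) hlen
    refine ⟨t :: l, isReducedWord_cons_iff.2 ⟨ht, htw, hl⟩,
      List.pairwise_cons.2 ⟨fun s hs => ?_, hp⟩⟩
    have hsw := hl.permAbsLe_of_mem hs
    exact hmin s ⟨hl.1 s hs, permAbsLe_trans hsw (permAbsLe_inv_mul htw)⟩
      fun h => not_permAbsLe_inv_mul ht htw (h ▸ hsw)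

theorem eq_of_isReducedWord_pairwise (hr : IsCompatibleSwapOrder r) (hw : HasIncreasingCycles w)
    {l₁ l₂ : List (Perm (Fin n))} (hl₁ : IsReducedWord w l₁) (hp₁ : l₁.Pairwise r)
    (hl₂ : IsReducedWord w l₂) (hp₂ : l₂.Pairwise r) : l₁ = l₂ := by
  induction l₁ generalizing w l₂ with
  | nil => exact (List.length_eq_zero_iff.1 (hl₂.2.2.trans hl₁.2.2.symm)).symm
  | cons t₁ l₁ ih =>
    obtain _ | ⟨t₂, l₂⟩ := l₂
    · exact absurd (hl₁.2.2.trans hl₂.2.2.symm) (by simp)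
    obtain ⟨ht₁, ht₁w, hl₁'⟩ := isReducedWord_cons_iff.1 hl₁
    obtain ⟨ht₂, ht₂w, hl₂'⟩ := isReducedWord_cons_iff.1 hl₂
    obtain rfl : t₁ = t₂ := by
      by_contra hne
      exact hr.asymm _ _ ht₁ ht₂ (hr.rel_of_isReducedWord_cons hw hl₁ hp₁ ht₂ ht₂w (Ne.symm hne))
        (hr.rel_of_isReducedWord_cons hw hl₂ hp₂ ht₁ ht₁w hne)
    rw [ih (hw.of_permAbsLe (permAbsLe_inv_mul ht₁w)) hl₁' hp₁.of_cons hl₂' hp₂.of_cons]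

theorem lex_of_isReducedWord_pairwise (hr : IsCompatibleSwapOrder r) (hw : HasIncreasingCycles w)
    {l₀ l : List (Perm (Fin n))} (hl₀ : IsReducedWord w l₀) (hp₀ : l₀.Pairwise r)
    (hl : IsReducedWord w l) (hne : l ≠ l₀) : List.Lex r l₀ l := by
  induction l₀ generalizing w l with
  | nil => exact absurd (List.length_eq_zero_iff.1 (hl.2.2.trans hl₀.2.2.symm)) hne
  | cons t₀ l₀ ih =>
    obtain _ | ⟨t, l⟩ := l
    · exact absurd (hl₀.2.2.trans hl.2.2.symm) (by simp)
    obtain ⟨ht, htw, hl'⟩ := isReducedWord_cons_iff.1 hl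
    by_cases h : t = t₀
    · subst h
      exact .cons (ih (hw.of_permAbsLe (permAbsLe_inv_mul htw))
        (isReducedWord_cons_iff.1 hl₀).2.2 hp₀.of_cons hl' fun h => hne (h ▸ rfl))
    · exact .rel (hr.rel_of_isReducedWord_cons hw hl₀ hp₀ ht htw h)

end IsCompatibleSwapOrder

end SwapOrder

section Chains

variable {n : ℕ} {u v : Perm (Fin n)}

lemma permLabels_cons_cons (x y : Perm (Fin n)) (l : List (Perm (Fin n))) :
    permLabels (x :: y :: l) = (x⁻¹ * y) :: permLabels (y :: l) := rfl

lemma permLabels_scanl (u : Perm (Fin n)) (l : List (Perm (Fin n))) :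
    permLabels (l.scanl (· * ·) u) = l := by
  induction l generalizing u with
  | nil => rfl
  | cons t l ih =>
    obtain ⟨rest, hrest⟩ : ∃ rest, l.scanl (· * ·) (u * t) = (u * t) :: rest := by
      cases l <;> simp [List.scanl_cons]
    rw [List.scanl_cons, hrest, permLabels_cons_cons, ← hrest, ih, inv_mul_cancel_left]

lemma scanl_permLabels (u : Perm (Fin n)) (l : List (Perm (Fin n))) :
    (permLabels (u :: l)).scanl (· * ·) u = u :: l := by
  induction l generalizing u with
  | nil => rfl
  | cons y l ih => rw [permLabels_cons_cons, List.scanl_cons, mul_inv_cancel_left, ih]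

lemma isChain_scanl_iff (u : Perm (Fin n)) (l : List (Perm (Fin n))) :
    (l.scanl (· * ·) u).IsChain permCovers ↔
      (∀ t ∈ l, t.IsSwap) ∧ permRefLen (u * l.prod) = permRefLen u + l.length := by
  induction l generalizing u with
  | nil => simp
  | cons t l ih =>
    rw [List.scanl_cons, List.isChain_cons, List.head?_scanl, ih]
    simp only [Option.mem_def, Option.some.injEq, forall_eq', permCovers_iff,
      inv_mul_cancel_left, List.forall_mem_cons, List.prod_cons, List.length_cons]
    rw [← mul_assoc]
    have h1 := permRefLen_mul_le (u * t) l.prod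
    have h2 := permRefLen_mul_le u t
    constructor
    · rintro ⟨⟨ht, hlen⟩, hl, hlen'⟩
      exact ⟨⟨ht, hl⟩, by omega⟩
    · rintro ⟨⟨ht, hl⟩, hlen⟩
      have h3 := permRefLen_le_length hl rfl
      rw [permRefLen_eq_one_iff.2 ht] at h2
      exact ⟨⟨ht, by omega⟩, hl, by omega⟩

theorem permMaxChain_iff (huv : permAbsLe u v) {c : List (Perm (Fin n))} :
    permMaxChain u v c ↔ ∃ l, IsReducedWord (u⁻¹ * v) l ∧ c = l.scanl (· * ·) u := by
  unfold permAbsLe at huv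
  constructor
  · rintro ⟨hhead, hlast, hchain⟩
    obtain ⟨rest, rfl⟩ : ∃ rest, c = u :: rest := by
      obtain _ | ⟨x, rest⟩ := c
      · simp at hhead
      · exact ⟨rest, by simpa using hhead⟩
    rw [← scanl_permLabels u rest] at hlast hchain ⊢
    rw [List.getLast?_scanl, List.foldl_mul_eq_mul_prod, Option.some.injEq] at hlast
    obtain ⟨hswap, hlen⟩ := (isChain_scanl_iff _ _).1 hchain
    refine ⟨_, ⟨hswap, by rw [← hlast, inv_mul_cancel_left], ?_⟩, rfl⟩
    rw [hlast] at hlen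
    omega
  · rintro ⟨l, ⟨hswap, hprod, hlen⟩, rfl⟩
    refine ⟨List.head?_scanl, ?_, (isChain_scanl_iff _ _).2 ⟨hswap, ?_⟩⟩
    · rw [List.getLast?_scanl, List.foldl_mul_eq_mul_prod, hprod, mul_inv_cancel_left]
    · rw [hprod, mul_inv_cancel_left, hlen]
      omega

end Chains

/-- In `S_n` with Coxeter element the `n`-cycle `γ = (1, 2, …, n)` (i.e. `finRotate n`),
any strict total order `r` on transpositions with `(i,j) < (i,k) < (j,k)` for
`i < j < k` makes the natural edge labeling of `[1, γ]` an EL-labeling: each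
non-singleton interval `[u, v]` of `[1, γ]` has a unique rising maximal chain,
which is lexicographically strictly smaller than every other maximal chain. -/
theorem statement18 (n : ℕ) (r : Equiv.Perm (Fin n) → Equiv.Perm (Fin n) → Prop)
    (hasymm : ∀ s t, s.IsSwap → t.IsSwap → r s t → ¬ r t s)
    (htrans : ∀ a b c, a.IsSwap → b.IsSwap → c.IsSwap → r a b → r b c → r a c)
    (htotal : ∀ s t, s.IsSwap → t.IsSwap → s ≠ t → r s t ∨ r t s)
    (hcompat : ∀ i j k : Fin n, i < j → j < k →
      r (Equiv.swap i j) (Equiv.swap i k) ∧ r (Equiv.swap i k) (Equiv.swap j k)) :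
    ∀ u v : Equiv.Perm (Fin n), permAbsLe 1 u → permAbsLe u v →
      permAbsLe v (finRotate n) → u ≠ v →
      ∃ l, (permMaxChain u v l ∧ (permLabels l).Pairwise r) ∧
        (∀ l', permMaxChain u v l' → (permLabels l').Pairwise r → l' = l) ∧
        (∀ l', permMaxChain u v l' → l' ≠ l →
          List.Lex r (permLabels l) (permLabels l')) := by
  intro u v _ huv hvγ _
  have hr : IsCompatibleSwapOrder r := ⟨hasymm, htrans, htotal, hcompat⟩
  have hw : HasIncreasingCycles (u⁻¹ * v) := hasIncreasingCycles_finRotate.of_permAbsLe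
    (permAbsLe_trans (permAbsLe_inv_mul huv) hvγ)
  obtain ⟨l₀, hl₀, hp₀⟩ := hr.exists_isReducedWord_pairwise hw
  refine ⟨l₀.scanl (· * ·) u, ⟨(permMaxChain_iff huv).2 ⟨l₀, hl₀, rfl⟩, by
    rwa [permLabels_scanl]⟩, fun c hc hpc => ?_, fun c hc hne => ?_⟩
  · obtain ⟨l, hl, rfl⟩ := (permMaxChain_iff huv).1 hc
    rw [permLabels_scanl] at hpc
    rw [hr.eq_of_isReducedWord_pairwise hw hl hpc hl₀ hp₀]
  · obtain ⟨l, hl, rfl⟩ := (permMaxChain_iff huv).1 hc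
    rw [permLabels_scanl, permLabels_scanl]
    exact hr.lex_of_isReducedWord_pairwise hw hl₀ hp₀ hl fun h => hne (h ▸ rfl)

end
end
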